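/- (Theorem 3, performance guarantee of the greedy algorithm.) Let P = {h₁, …, hₙ} ⊆ D be a finite heuristic population with n > k and k ≥ 2. Let H₁ = {h*} where h* minimizes F({h}) over h ∈ P, and let the greedy sets H₁ ⊂ H₂ ⊂ ⋯ ⊂ H_k be built by iteratively adding, at each step j = 1, …, k−1, an element h_{j}' ∈ P \ H_j maximizing the marginal decrease F(H_j) − F(H_j ∪ {h}) over h ∈ P \ H_j, and setting H_{j+1} = H_j ∪ {h_j'}. Let Hᵒ be a subset of P of size k minimizing F among all size-k subsets of P. Then the greedy output H^{ga} = H_k satisfies F(H₁) − F(H^{ga}) ≥ (1 − k/(e·k − e)) · (F(H₁) − F(Hᵒ)), where e is the natural constant. -/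

import Mathlib

/-!
`F` is a nonnegative multiple of a sum of functions `S ↦ min_{h ∈ S} f_i h`, each antitone with
diminishing returns. Hence the `k` elements of `Hᵒ`, added to the greedy set `H_j`, lower `F`
to at most `F(Hᵒ)`, so one of them, and therefore the greedy choice, gains at least
`(F(H_j) - F(Hᵒ)) / k`. The gap to `F(Hᵒ)` thus shrinks by a factor `1 - 1/k` in each of the
`k - 1` steps, and `(1 - 1/k)^(k-1) ≤ k / (e (k - 1))` since `(1 - 1/k)^k ≤ 1/e`.
-/

open Finset

section GreedyAnalysis

variable {D : Type*}

/-- The consequence of submodularity that the greedy analysis uses. Only nonempty `A` are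
considered, since `sInf ∅ = 0` breaks monotonicity of `S ↦ sInf (g '' S)` at `∅`. -/
def GainSubadditive [DecidableEq D] (F : Finset D → ℝ) : Prop :=
  ∀ ⦃A : Finset D⦄, A.Nonempty → ∀ B : Finset D,
    F A - F (A ∪ B) ≤ ∑ b ∈ B \ A, (F A - F (insert b A))

section SetFunctions

variable {ι : Type*} {F : Finset D → ℝ}

lemma antitoneOn_sum {s : Finset ι} {G : ι → Finset D → ℝ}
    (hG : ∀ i ∈ s, AntitoneOn (G i) {A | A.Nonempty}) :
    AntitoneOn (fun A ↦ ∑ i ∈ s, G i A) {A | A.Nonempty} :=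
  fun _ hA _ hB hAB ↦ sum_le_sum fun i hi ↦ hG i hi hA hB hAB

lemma AntitoneOn.const_mul_of_nonneg {s : Set (Finset D)} (hF : AntitoneOn F s) {c : ℝ}
    (hc : 0 ≤ c) : AntitoneOn (fun A ↦ c * F A) s :=
  fun _ hA _ hB hAB ↦ mul_le_mul_of_nonneg_left (hF hA hB hAB) hc

variable [DecidableEq D]

lemma GainSubadditive.sum {s : Finset ι} {G : ι → Finset D → ℝ}
    (hG : ∀ i ∈ s, GainSubadditive (G i)) :
    GainSubadditive (fun A ↦ ∑ i ∈ s, G i A) := by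
  intro A hA B
  simp only [← sum_sub_distrib]
  rw [sum_comm]
  exact sum_le_sum fun i hi ↦ hG i hi hA B

lemma GainSubadditive.const_mul (hF : GainSubadditive F) {c : ℝ} (hc : 0 ≤ c) :
    GainSubadditive (fun A ↦ c * F A) := by
  intro A hA B
  simp only [← mul_sub, ← mul_sum]
  exact mul_le_mul_of_nonneg_left (hF hA B) hc

end SetFunctions

section MinImage

variable (g : D → ℝ)

lemma antitoneOn_sInf_image :
    AntitoneOn (fun S : Finset D ↦ sInf (g '' S)) {A | A.Nonempty} := by
  intro A hA B hB hAB
  simp only [← inf'_eq_csInf_image _ hA, ← inf'_eq_csInf_image _ hB]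
  exact inf'_mono g hAB hA

lemma gainSubadditive_sInf_image [DecidableEq D] :
    GainSubadditive (fun S : Finset D ↦ sInf (g '' S)) := by
  intro A hA B
  have hanti := antitoneOn_sInf_image g
  have hgain_nonneg : ∀ b ∈ B \ A, 0 ≤ sInf (g '' A) - sInf (g '' ↑(insert b A)) := fun b _ ↦
    sub_nonneg.2 (hanti hA (insert_nonempty b A) (subset_insert b A))
  -- The minimum over `A ∪ B` is attained either in `A` or at a single `b ∈ B \ A`.
  have hAB : (A ∪ B).Nonempty := hA.mono subset_union_left
  obtain ⟨b, hb, hmin⟩ := exists_mem_eq_inf' hAB g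
  rw [inf'_eq_csInf_image _ hAB] at hmin
  simp only [hmin]
  by_cases hbA : b ∈ A
  · have : sInf (g '' A) ≤ g b := by
      rw [← inf'_eq_csInf_image _ hA]; exact inf'_le g hbA
    linarith [sum_nonneg hgain_nonneg]
  · have hbBA : b ∈ B \ A := mem_sdiff.2 ⟨(mem_union.1 hb).resolve_left hbA, hbA⟩
    have : sInf (g '' ↑(insert b A)) ≤ g b := by
      rw [← inf'_eq_csInf_image _ (insert_nonempty b A)]; exact inf'_le g (mem_insert_self b A)
    linarith [single_le_sum hgain_nonneg hbBA]

end MinImage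

section Greedy

variable {F : Finset D → ℝ}

lemma optimum_le_of_card_le (hanti : AntitoneOn F {A | A.Nonempty}) {P O A : Finset D} {k : ℕ}
    (hA : A.Nonempty) (hAP : A ⊆ P) (hAk : A.card ≤ k) (hkP : k ≤ P.card)
    (hO : ∀ S ⊆ P, S.card = k → F O ≤ F S) : F O ≤ F A := by
  obtain ⟨S, hAS, hSP, hS⟩ := exists_subsuperset_card_eq hAP hAk hkP
  exact (hO S hSP hS).trans (hanti hA (hA.mono hAS) hAS)

variable [DecidableEq D]

lemma sub_le_mul_greedy_gain (hanti : AntitoneOn F {A | A.Nonempty}) (hsub : GainSubadditive F)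
    {P O A : Finset D} {a : D} {k : ℕ} (hO : O.Nonempty) (hOP : O ⊆ P) (hOk : O.card ≤ k)
    (hA : A.Nonempty) (ha : ∀ b ∈ P \ A, F A - F (insert b A) ≤ F A - F (insert a A)) :
    F A - F O ≤ k * (F A - F (insert a A)) := by
  have hgain : 0 ≤ F A - F (insert a A) :=
    sub_nonneg.2 (hanti hA (insert_nonempty a A) (subset_insert a A))
  have hunion : F (A ∪ O) ≤ F O := hanti hO (hO.mono subset_union_right) subset_union_right
  calc F A - F O ≤ F A - F (A ∪ O) := by linarith
    _ ≤ ∑ b ∈ O \ A, (F A - F (insert b A)) := hsub hA O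
    _ ≤ ∑ b ∈ O \ A, (F A - F (insert a A)) :=
        sum_le_sum fun b hb ↦ ha b (sdiff_subset_sdiff hOP le_rfl hb)
    _ = (O \ A).card * (F A - F (insert a A)) := by rw [sum_const, nsmul_eq_mul]
    _ ≤ k * (F A - F (insert a A)) := by
        gcongr
        exact_mod_cast (card_le_card sdiff_subset).trans hOk

lemma greedy_gap_step (hanti : AntitoneOn F {A | A.Nonempty}) (hsub : GainSubadditive F)
    {P O A : Finset D} {a : D} {k : ℕ} (hO : O.Nonempty) (hOP : O ⊆ P) (hOk : O.card ≤ k)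
    (hA : A.Nonempty) (ha : ∀ b ∈ P \ A, F A - F (insert b A) ≤ F A - F (insert a A)) :
    F (insert a A) - F O ≤ (1 - 1 / (k : ℝ)) * (F A - F O) := by
  have hk : (0 : ℝ) < k := by exact_mod_cast hO.card_pos.trans_le hOk
  have := sub_le_mul_greedy_gain hanti hsub hO hOP hOk hA ha
  have : (F A - F O) / k ≤ F A - F (insert a A) := (div_le_iff₀' hk).2 this
  calc F (insert a A) - F O ≤ (F A - F O) - (F A - F O) / k := by linarith
    _ = (1 - 1 / (k : ℝ)) * (F A - F O) := by ring

lemma greedy_gap_le_pow (hanti : AntitoneOn F {A | A.Nonempty}) (hsub : GainSubadditive F)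
    {P O : Finset D} {k : ℕ} (hO : O.Nonempty) (hOP : O ⊆ P) (hOk : O.card ≤ k)
    {H : ℕ → Finset D} (hH1 : (H 1).Nonempty)
    (hgreedy : ∀ j, 1 ≤ j → j < k → ∃ h' ∈ P \ H j,
      (∀ h ∈ P \ H j,
        F (H j) - F (insert h (H j)) ≤ F (H j) - F (insert h' (H j))) ∧
      H (j + 1) = insert h' (H j)) :
    ∀ j < k, (H (j + 1)).Nonempty ∧
      F (H (j + 1)) - F O ≤ (1 - 1 / (k : ℝ)) ^ j * (F (H 1) - F O) := by
  intro j hj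
  induction j with
  | zero => simpa using hH1
  | succ j ih =>
    obtain ⟨hne, hgap⟩ := ih (by omega)
    obtain ⟨a, -, ha, hnext⟩ := hgreedy (j + 1) (by omega) hj
    have hk : (1 : ℝ) ≤ k := by exact_mod_cast (show 1 ≤ k by omega)
    refine ⟨hnext ▸ insert_nonempty a _, ?_⟩
    calc F (H (j + 1 + 1)) - F O ≤ (1 - 1 / (k : ℝ)) * (F (H (j + 1)) - F O) :=
          hnext ▸ greedy_gap_step hanti hsub hO hOP hOk hne ha
      _ ≤ (1 - 1 / (k : ℝ)) * ((1 - 1 / (k : ℝ)) ^ j * (F (H 1) - F O)) :=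
          mul_le_mul_of_nonneg_left hgap (sub_nonneg.2 (div_le_one_of_le₀ hk (by positivity)))
      _ = (1 - 1 / (k : ℝ)) ^ (j + 1) * (F (H 1) - F O) := by ring

end Greedy

lemma one_sub_inv_pow_pred_le {k : ℕ} (hk : 2 ≤ k) :
    (1 - 1 / (k : ℝ)) ^ (k - 1) ≤ k / (Real.exp 1 * k - Real.exp 1) := by
  have hk1 : (1 : ℝ) < k := by exact_mod_cast hk
  have hpow : (1 - 1 / (k : ℝ)) ^ k ≤ Real.exp (-1) := Real.one_sub_div_pow_le_exp_neg hk1.le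
  have hsplit : (1 - 1 / (k : ℝ)) ^ k = (1 - 1 / (k : ℝ)) ^ (k - 1) * (1 - 1 / k) := by
    rw [← pow_succ, Nat.sub_add_cancel (by omega)]
  rw [le_div_iff₀ (by nlinarith [Real.exp_pos 1])]
  calc (1 - 1 / (k : ℝ)) ^ (k - 1) * (Real.exp 1 * k - Real.exp 1)
      = Real.exp 1 * k * (1 - 1 / (k : ℝ)) ^ k := by
        rw [hsplit]; field_simp
    _ ≤ Real.exp 1 * k * Real.exp (-1) := by gcongr
    _ = k := by rw [Real.exp_neg]; field_simp

end GreedyAnalysis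

theorem greedy_performance_guarantee_general {D ι : Type*} [DecidableEq D]
    (I : Finset ι) (f : ι → D → ℝ)
    (P : Finset D) (k : ℕ) (hk : 2 ≤ k) (hkn : k < P.card)
    (F : Finset D → ℝ)
    (hF : ∀ S : Finset D,
      F S = (1 / (I.card : ℝ)) * ∑ i ∈ I, sInf (f i '' (S : Set D)))
    (hstar : D) (hstarP : hstar ∈ P)
    (H : ℕ → Finset D) (hH1 : H 1 = {hstar})
    (hgreedy : ∀ j, 1 ≤ j → j < k → ∃ h' ∈ P \ H j,
      (∀ h ∈ P \ H j,
        F (H j) - F (insert h (H j)) ≤ F (H j) - F (insert h' (H j))) ∧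
      H (j + 1) = insert h' (H j))
    (Ho : Finset D) (hHoP : Ho ⊆ P) (hHocard : Ho.card = k)
    (hHoMin : ∀ S ⊆ P, S.card = k → F Ho ≤ F S) :
    F (H 1) - F (H k) ≥
      (1 - (k : ℝ) / (Real.exp 1 * k - Real.exp 1)) * (F (H 1) - F Ho) := by
  have hFeq : F = fun S : Finset D ↦ (1 / (I.card : ℝ)) * ∑ i ∈ I, sInf (f i '' (S : Set D)) := funext hF
  have hc : 0 ≤ 1 / (I.card : ℝ) := by positivity
  have hanti : AntitoneOn F {A | A.Nonempty} :=
    hFeq ▸ (antitoneOn_sum fun i _ ↦ antitoneOn_sInf_image (f i)).const_mul_of_nonneg hc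
  have hsub : GainSubadditive F :=
    hFeq ▸ (GainSubadditive.sum fun i _ ↦ gainSubadditive_sInf_image (f i)).const_mul hc
  have hH1ne : (H 1).Nonempty := hH1 ▸ singleton_nonempty hstar
  have hHo : Ho.Nonempty := card_pos.1 (by omega)
  obtain ⟨-, hgap⟩ := greedy_gap_le_pow hanti hsub hHo hHoP hHocard.le hH1ne hgreedy (k - 1) (by omega)
  rw [Nat.sub_add_cancel (by omega)] at hgap
  have hgap1 : 0 ≤ F (H 1) - F Ho := sub_nonneg.2 <|
    optimum_le_of_card_le hanti hH1ne (hH1 ▸ singleton_subset_iff.2 hstarP)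
      (by rw [hH1, card_singleton]; omega) hkn.le hHoMin
  nlinarith [mul_le_mul_of_nonneg_right (one_sub_inv_pow_pred_le hk) hgap1]

/-- Theorem 3 (performance guarantee of the greedy algorithm): let `P ⊆ D` be a
finite heuristic population with `|P| > k ≥ 2`, let `H₁ = {h*}` with `h*`
minimizing `F({h})` over `h ∈ P`, and let the greedy sets be built by iteratively
adding an element of `P \ H_j` maximizing the marginal decrease of `F`. If `Hᵒ`
is a size-`k` subset of `P` minimizing `F` among all size-`k` subsets of `P`,
then the greedy output `H^{ga} = H_k` satisfies
`F(H₁) - F(H^{ga}) ≥ (1 - k/(e·k - e)) · (F(H₁) - F(Hᵒ))`. -/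
theorem greedy_performance_guarantee {D ι : Type*} [DecidableEq D]
    (I : Finset ι) (hI : I.Nonempty) (f : ι → D → ℝ)
    (P : Finset D) (k : ℕ) (hk : 2 ≤ k) (hkn : k < P.card)
    (F : Finset D → ℝ)
    (hF : ∀ S : Finset D,
      F S = (1 / (I.card : ℝ)) * ∑ i ∈ I, sInf (f i '' (S : Set D)))
    (hstar : D) (hstarP : hstar ∈ P)
    (hstarMin : ∀ h ∈ P, F {hstar} ≤ F {h})
    (H : ℕ → Finset D) (hH1 : H 1 = {hstar})
    (hgreedy : ∀ j, 1 ≤ j → j < k → ∃ h' ∈ P \ H j,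
      (∀ h ∈ P \ H j,
        F (H j) - F (insert h (H j)) ≤ F (H j) - F (insert h' (H j))) ∧
      H (j + 1) = insert h' (H j))
    (Ho : Finset D) (hHoP : Ho ⊆ P) (hHocard : Ho.card = k)
    (hHoMin : ∀ S ⊆ P, S.card = k → F Ho ≤ F S) :
    F (H 1) - F (H k) ≥
      (1 - (k : ℝ) / (Real.exp 1 * k - Real.exp 1)) * (F (H 1) - F Ho) :=
  greedy_performance_guarantee_general I f P k hk hkn F hF hstar hstarP H hH1 hgreedy Ho hHoP
    hHocard hHoMin
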